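/- The distance matrix of the complete multipartite graph K_{n_1,...,n_k} (n = Σ n_i ≥ 3, k ≥ 2) has -2 as an eigenvalue with multiplicity exactly n - k. -/

import Mathlib

/-!
Adding `2 I` to the distance matrix `D` of `K_{n₁,…,n_k}` gives the matrix with entries `2`
inside a part and `1` between parts. Its column indexed by a vertex of part `j` is `1 + e_j`
pulled back along the map sending a vertex to its part; as these `k` vectors are linearly
independent, `D + 2 I` has rank `k`. Since `D` is symmetric, the multiplicity of `-2` as a root
of its characteristic polynomial is the nullity `n - k` of `D + 2 I`.
-/

open Polynomial Finset

/-- The distance matrix of the complete multipartite graph `K_{n₁,…,n_k}`. -/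
noncomputable def distMatrixCM {k : ℕ} (n : Fin k → ℕ) :
    Matrix (Σ i, Fin (n i)) (Σ i, Fin (n i)) ℝ :=
  Matrix.of fun u v => if u = v then 0 else if u.1 = v.1 then 2 else 1

open Matrix

namespace Matrix

variable {ι : Type*} [Fintype ι] [DecidableEq ι]

theorem rootMultiplicity_charpoly_sub_scalar {R : Type*} [CommRing R] (M : Matrix ι ι R) (μ : R) :
    (M - scalar ι μ).charpoly.rootMultiplicity 0 = M.charpoly.rootMultiplicity μ := by
  rw [charpoly_sub_scalar, ← rootMultiplicity_eq_rootMultiplicity]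

theorem IsHermitian.rootMultiplicity_charpoly_zero {𝕜 : Type*} [RCLike 𝕜] {A : Matrix ι ι 𝕜}
    (hA : A.IsHermitian) : A.charpoly.rootMultiplicity 0 = Fintype.card ι - A.rank := by
  classical
  rw [← count_roots, hA.roots_charpoly_eq_eigenvalues, Multiset.count_map,
    hA.rank_eq_card_non_zero_eigs, Fintype.card_subtype, ← card_univ,
    ← card_filter_add_card_filter_not (s := univ) (p := fun i => hA.eigenvalues i = 0),
    Nat.add_sub_cancel]
  simp [Finset.card, eq_comm (a := (0 : 𝕜))]

end Matrix

theorem linearIndependent_one_add_single {ι K : Type*} [Fintype ι] [DecidableEq ι] [Field K]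
    [CharZero K] : LinearIndependent K (fun j : ι => (1 : ι → K) + Pi.single j 1) := by
  rw [Fintype.linearIndependent_iff]
  intro c hc
  have hc_eq : ∀ i, c i = -∑ j, c j := fun i => by
    have := congrFun hc i
    simp only [Finset.sum_apply, Pi.add_apply, Pi.smul_apply, Pi.one_apply, smul_eq_mul,
      mul_add, mul_one, Pi.single_apply, mul_ite, mul_zero, sum_add_distrib, sum_ite_eq,
      mem_univ, if_true, Pi.zero_apply] at this
    linear_combination this
  have hsum : ∑ j, c j = 0 := by
    have h := sum_congr rfl fun i (_ : i ∈ univ) => hc_eq i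
    rw [sum_neg_distrib, sum_const, card_univ, nsmul_eq_mul] at h
    have : ((Fintype.card ι : K) + 1) * ∑ j, c j = 0 := by linear_combination h
    exact (mul_eq_zero.mp this).resolve_left (Nat.cast_add_one_ne_zero _)
  simpa [hsum] using hc_eq

section distMatrixCM

variable {k : ℕ} (n : Fin k → ℕ)

theorem isHermitian_distMatrixCM : (distMatrixCM n).IsHermitian := by
  ext u v
  simp only [conjTranspose_apply, distMatrixCM, of_apply, star_trivial, eq_comm]

theorem col_distMatrixCM_sub_scalar_neg_two :
    (distMatrixCM n - scalar _ (-2)).col =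
      (LinearMap.funLeft ℝ ℝ Sigma.fst ∘ fun j : Fin k => 1 + Pi.single j 1) ∘ Sigma.fst := by
  ext v u
  by_cases huv : u = v
  · subst huv
    norm_num [distMatrixCM]
  · by_cases h : u.1 = v.1 <;> norm_num [distMatrixCM, huv, h]

theorem rank_distMatrixCM_sub_scalar_neg_two (hn : ∀ i, 0 < n i) :
    (distMatrixCM n - scalar _ (-2)).rank = k := by
  have hsurj : Function.Surjective (Sigma.fst : (Σ i, Fin (n i)) → Fin k) :=
    fun j => ⟨⟨j, 0, hn j⟩, rfl⟩
  have hli := (linearIndependent_one_add_single (ι := Fin k) (K := ℝ)).map'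
    (LinearMap.funLeft ℝ ℝ Sigma.fst)
    (LinearMap.ker_eq_bot.mpr (LinearMap.funLeft_injective_of_surjective _ _ _ hsurj))
  rw [rank_eq_finrank_span_cols, col_distMatrixCM_sub_scalar_neg_two, hsurj.range_comp,
    finrank_span_eq_card hli, Fintype.card_fin]

end distMatrixCM

theorem distMatrixCM_eigenvalue_neg_two_general (k : ℕ) (n : Fin k → ℕ)
    (hn : ∀ i, 0 < n i) :
    (distMatrixCM n).charpoly.rootMultiplicity (-2) = (∑ i, n i) - k := by
  have hH : (distMatrixCM n - scalar _ (-2)).IsHermitian :=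
    (isHermitian_distMatrixCM n).sub (isHermitian_diagonal _)
  rw [← rootMultiplicity_charpoly_sub_scalar, hH.rootMultiplicity_charpoly_zero,
    rank_distMatrixCM_sub_scalar_neg_two n hn, Fintype.card_sigma]
  simp only [Fintype.card_fin]

/-- For `n = Σ nᵢ ≥ 3` and `k ≥ 2`, `-2` is an eigenvalue of the distance matrix of
`K_{n₁,…,n_k}` with multiplicity exactly `n - k`. -/
theorem distMatrixCM_eigenvalue_neg_two (k : ℕ) (n : Fin k → ℕ)
    (hn : ∀ i, 0 < n i) (hsum : 3 ≤ ∑ i, n i) (hk : 2 ≤ k) :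
    (distMatrixCM n).charpoly.rootMultiplicity (-2) = (∑ i, n i) - k :=
  distMatrixCM_eigenvalue_neg_two_general k n hn
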